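/- arXiv:2112.15196 — 3 statements merged into one kernel-verified Lean document; each statement's English description precedes it below -/
import Mathlib

section
/- Let ρ, σ, q : [0, ℓ] → ℝ be continuous with ρ(x) ≥ ρ₀ > 0, σ(x) ≥ σ₀ > 0, q(x) ≥ 0. Let u ∈ C⁴([a,b]) (with [a,b] ⊆ [0,ℓ], a < b) be a nontrivial solution of (σ u'')'' - (q u')' - ρ u = 0 on [a,b]. Define Tu = (σ u'')' - q u'. If u(a) ≥ 0, u'(a) ≥ 0, u''(a) ≥ 0, Tu(a) ≥ 0 and not all four are zero, then u(x) > 0, u'(x) > 0, u''(x) > 0 and Tu(x) > 0 for all x ∈ (a, b]. -/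
/-!
With `y = (u, u', σu'', Tu)` the equation is a first-order system `y' = A(x) y` whose matrix has
nonnegative entries and `A i (i + 1) > 0` (indices mod 4). Nonnegative data of such a cooperative
system stay nonnegative: if `M` bounds the row sums of `A`, each component of `y + ε e^{(M+1)x}`
has positive derivative wherever it first vanishes, so it never does. Then every component is
nondecreasing, the one positive at `a` stays positive, and positivity passes from `y (i + 1)` to
`y i` around the cycle because `y i' ≥ A i (i + 1) * y (i + 1)`.
-/

open Real Set Matrix

open Fin.CommRing in
theorem Fin.forall_of_forall_add_one_imp {n : ℕ} [NeZero n] {P : Fin n → Prop}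
    (hP : ∀ i, P (i + 1) → P i) {k : Fin n} (hk : P k) : ∀ i, P i := by
  have hsub : ∀ m : ℕ, P (k - (m : Fin n)) := by
    intro m
    induction m with
    | zero => simpa using hk
    | succ m ih => exact hP _ (by convert ih using 2; push_cast; ring)
  intro i
  simpa using hsub (k - i).val

theorem pos_on_Icc_of_deriv_pos_of_eq_zero {ι : Type*} [Finite ι] {a b : ℝ} {z : ι → ℝ → ℝ}
    (hz : ∀ i, ContinuousOn (z i) (Icc a b)) (ha : ∀ i, 0 < z i a)
    (hzero : ∀ c ∈ Ioc a b, ∀ i, (∀ j, 0 ≤ z j c) → z i c = 0 → 0 < deriv (z i) c) :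
    ∀ x ∈ Icc a b, ∀ i, 0 < z i x := by
  by_contra! hbad
  set S := ⋃ i, Icc a b ∩ z i ⁻¹' Iic 0
  have hS : IsClosed S := isClosed_iUnion_of_finite fun i =>
    (hz i).preimage_isClosed_of_isClosed isClosed_Icc isClosed_Iic
  have hbdd : BddBelow S := ⟨a, fun x hx => (mem_iUnion.1 hx).choose_spec.1.1⟩
  have hne : S.Nonempty := by
    obtain ⟨x, hx, i, hi⟩ := hbad
    exact ⟨x, mem_iUnion.2 ⟨i, hx, hi⟩⟩
  have hcS := hS.csInf_mem hne hbdd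
  have hmin : ∀ x ∈ S, sInf S ≤ x := fun x hx => csInf_le hbdd hx
  generalize sInf S = c at hcS hmin
  obtain ⟨i, hcI, hic⟩ := mem_iUnion.1 hcS
  have hleft : ∀ x ∈ Ico a c, ∀ j, 0 < z j x := by
    intro x hx j
    by_contra! hj
    exact hx.2.not_ge (hmin x (mem_iUnion.2 ⟨j, ⟨hx.1, hx.2.le.trans hcI.2⟩, hj⟩))
  have hac : a < c := hcI.1.lt_of_ne fun hac => (ha i).not_ge (hac ▸ hic)
  have hnonneg : ∀ j, 0 ≤ z j c := by
    intro j
    have hcl : c ∈ closure (Ico a c) := by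
      rw [closure_Ico hac.ne]
      exact right_mem_Icc.2 hac.le
    refine continuousWithinAt_const.closure_le hcl ((hz j c hcI).mono ?_)
      fun x hx => (hleft x hx j).le
    exact fun x hx => ⟨hx.1, hx.2.le.trans hcI.2⟩
  have hic0 : z i c = 0 := le_antisymm hic (hnonneg i)
  have hsign := eventually_nhdsWithin_sign_eq_of_deriv_pos
    (hzero c ⟨hac, hcI.2⟩ i hnonneg hic0) hic0
  obtain ⟨x, hsx, hx⟩ :=
    ((hsign.filter_mono nhdsWithin_le_nhds).and (Ioo_mem_nhdsLT hac)).exists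
  rw [sign_pos (hleft x ⟨hx.1.le, hx.2⟩ i), sign_neg (sub_neg.2 hx.2)] at hsx
  exact absurd hsx (by decide)

section CooperativeSystem

variable {ι : Type*} [Fintype ι] {a b : ℝ} {y : ι → ℝ → ℝ} {A : ℝ → Matrix ι ι ℝ}

theorem nonneg_of_hasDerivAt_mulVec {M : ℝ}
    (hy : ∀ x ∈ Icc a b, ∀ i, HasDerivAt (y i) ((A x *ᵥ fun j => y j x) i) x)
    (hA : ∀ x ∈ Icc a b, ∀ i j, 0 ≤ A x i j) (hM : ∀ x ∈ Icc a b, ∀ i, ∑ j, A x i j ≤ M)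
    (ha : ∀ i, 0 ≤ y i a) :
    ∀ x ∈ Icc a b, ∀ i, 0 ≤ y i x := by
  have hpert : ∀ ε > 0, ∀ x ∈ Icc a b, ∀ i, 0 < y i x + ε * exp ((M + 1) * x) := by
    intro ε hε
    refine pos_on_Icc_of_deriv_pos_of_eq_zero (z := fun i x => y i x + ε * exp ((M + 1) * x))
      (fun i x hx => ((hy x hx i).continuousAt.add (by fun_prop)).continuousWithinAt)
      (fun i => add_pos_of_nonneg_of_pos (ha i) (by positivity)) ?_
    intro c hc i hz _
    have hc' := Ioc_subset_Icc_self hc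
    have hd : HasDerivAt (fun x => y i x + ε * exp ((M + 1) * x)) _ c :=
      (hy c hc' i).add ((((hasDerivAt_id' c).const_mul (M + 1)).exp).const_mul ε)
    rw [hd.deriv]
    set e := ε * exp ((M + 1) * c)
    have he : 0 < e := by positivity
    have hlow : -(M * e) ≤ (A c *ᵥ fun j => y j c) i :=
      calc -(M * e) ≤ ∑ j, A c i j * -e := by
            rw [← Finset.sum_mul, mul_neg, neg_le_neg_iff]
            exact mul_le_mul_of_nonneg_right (hM c hc' i) he.le
        _ ≤ ∑ j, A c i j * y j c := Finset.sum_le_sum fun j _ =>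
            mul_le_mul_of_nonneg_left (by linarith [hz j]) (hA c hc' i j)
    nlinarith
  intro x hx i
  by_contra! hneg
  have := hpert (-y i x / exp ((M + 1) * x)) (div_pos (neg_pos.2 hneg) (exp_pos _)) x hx i
  rw [div_mul_cancel₀ _ (exp_pos _).ne'] at this
  linarith

theorem pos_on_Ioc_of_pos_left
    (hy : ∀ x ∈ Icc a b, ∀ i, HasDerivAt (y i) ((A x *ᵥ fun j => y j x) i) x)
    (hA : ∀ x ∈ Icc a b, ∀ i j, 0 ≤ A x i j) (hnonneg : ∀ x ∈ Icc a b, ∀ i, 0 ≤ y i x)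
    {i : ι} (hi : 0 < y i a) :
    ∀ x ∈ Ioc a b, 0 < y i x := by
  intro x hx
  refine hi.trans_le (monotoneOn_of_deriv_nonneg (convex_Icc a b)
    (fun x hx => (hy x hx i).continuousAt.continuousWithinAt) ?_ ?_
    (left_mem_Icc.2 (hx.1.le.trans hx.2)) (Ioc_subset_Icc_self hx) hx.1.le)
  · intro x hx
    exact (hy x (interior_subset hx) i).differentiableAt.differentiableWithinAt
  · intro x hx
    rw [interior_Icc] at hx
    rw [(hy x (Ioo_subset_Icc_self hx) i).deriv]
    exact Finset.sum_nonneg fun j _ =>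
      mul_nonneg (hA x (Ioo_subset_Icc_self hx) i j) (hnonneg x (Ioo_subset_Icc_self hx) j)

theorem pos_on_Ioc_of_pos_entry
    (hy : ∀ x ∈ Icc a b, ∀ i, HasDerivAt (y i) ((A x *ᵥ fun j => y j x) i) x)
    (hA : ∀ x ∈ Icc a b, ∀ i j, 0 ≤ A x i j) (hnonneg : ∀ x ∈ Icc a b, ∀ i, 0 ≤ y i x)
    {i j : ι} (hij : ∀ x ∈ Ioo a b, 0 < A x i j) (hj : ∀ x ∈ Ioc a b, 0 < y j x) :
    ∀ x ∈ Ioc a b, 0 < y i x := by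
  intro x hx
  refine (hnonneg a (left_mem_Icc.2 (hx.1.le.trans hx.2)) i).trans_lt
    (strictMonoOn_of_deriv_pos (convex_Icc a b)
    (fun x hx => (hy x hx i).continuousAt.continuousWithinAt) ?_
    (left_mem_Icc.2 (hx.1.le.trans hx.2)) (Ioc_subset_Icc_self hx) hx.1)
  intro x hx
  rw [interior_Icc] at hx
  have hx' := Ioo_subset_Icc_self hx
  rw [(hy x hx' i).deriv]
  calc 0 < A x i j * y j x := mul_pos (hij x hx) (hj x (Ioo_subset_Ioc_self hx))
    _ ≤ (A x *ᵥ fun j => y j x) i :=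
      Finset.single_le_sum (f := fun k => A x i k * y k x)
        (fun k _ => mul_nonneg (hA x hx' i k) (hnonneg x hx' k)) (Finset.mem_univ j)

end CooperativeSystem

noncomputable section Beam

variable {ρ σ q u : ℝ → ℝ}

def shear (σ q u : ℝ → ℝ) (x : ℝ) : ℝ :=
  deriv (fun y => σ y * deriv (deriv u) y) x - q x * deriv u x

def beamState (σ q u : ℝ → ℝ) : Fin 4 → ℝ → ℝ :=
  ![u, deriv u, fun x => σ x * deriv (deriv u) x, shear σ q u]

def beamMatrix (ρ σ q : ℝ → ℝ) (x : ℝ) : Matrix (Fin 4) (Fin 4) ℝ :=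
  !![0, 1, 0, 0; 0, 0, (σ x)⁻¹, 0; 0, q x, 0, 1; ρ x, 0, 0, 0]

theorem hasDerivAt_beamState (hσ : ContDiff ℝ 2 σ) (hq : ContDiff ℝ 1 q) (hu : ContDiff ℝ 4 u)
    {x : ℝ} (hσx : σ x ≠ 0)
    (hode : deriv (deriv (fun y => σ y * deriv (deriv u) y)) x
      - deriv (fun y => q y * deriv u y) x - ρ x * u x = 0) (i : Fin 4) :
    HasDerivAt (beamState σ q u i)
      ((beamMatrix ρ σ q x *ᵥ fun j => beamState σ q u j x) i) x := by
  have hu₁ : ContDiff ℝ 3 (deriv u) := hu.deriv'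
  have hu₂ : ContDiff ℝ 2 (deriv (deriv u)) := hu₁.deriv'
  have hw : ContDiff ℝ 1 (deriv fun y => σ y * deriv (deriv u) y) := (hσ.mul hu₂).deriv'
  have hqu : ContDiff ℝ 1 fun y => q y * deriv u y := hq.mul (hu₁.of_le (by norm_num))
  fin_cases i <;> simp [beamState, beamMatrix, mulVec, dotProduct, Fin.sum_univ_four]
  · exact hu.differentiable (by norm_num) x
  · rw [inv_mul_cancel_left₀ hσx]
    exact (hu₁.differentiable (by norm_num) x).hasDerivAt
  · refine ((hσ.mul hu₂).differentiable (by norm_num) x).hasDerivAt.congr_deriv ?_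
    unfold shear
    ring
  · exact (hw.differentiable one_ne_zero x).hasDerivAt.sub
      (hqu.differentiable one_ne_zero x).hasDerivAt |>.congr_deriv (by linarith)

theorem beamMatrix_nonneg {x : ℝ} (hρ : 0 ≤ ρ x) (hσ : 0 ≤ σ x) (hq : 0 ≤ q x) (i j : Fin 4) :
    0 ≤ beamMatrix ρ σ q x i j := by
  fin_cases i <;> fin_cases j <;> simp [beamMatrix, hρ, hσ, hq]

theorem beamMatrix_add_one_pos {x : ℝ} (hρ : 0 < ρ x) (hσ : 0 < σ x) (i : Fin 4) :
    0 < beamMatrix ρ σ q x i (i + 1) := by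
  fin_cases i <;> simp [beamMatrix, hρ, hσ]

theorem sum_beamMatrix_le {x σ₀ Q R : ℝ} (hσ₀ : 0 < σ₀) (hσ : σ₀ ≤ σ x) (hq : q x ≤ Q)
    (hρ : ρ x ≤ R) (i : Fin 4) :
    ∑ j, beamMatrix ρ σ q x i j ≤ max (max 1 σ₀⁻¹) (max (Q + 1) R) := by
  have hσinv : (σ x)⁻¹ ≤ σ₀⁻¹ := inv_anti₀ hσ₀ hσ
  fin_cases i <;> simp [beamMatrix, Fin.sum_univ_four, hσinv, hq, hρ]

theorem beamState_nonneg_and_exists_pos {x : ℝ} (hσ : 0 < σ x) (h0 : 0 ≤ u x)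
    (h1 : 0 ≤ deriv u x) (h2 : 0 ≤ deriv (deriv u) x) (h3 : 0 ≤ shear σ q u x)
    (hnz : ¬(u x = 0 ∧ deriv u x = 0 ∧ deriv (deriv u) x = 0 ∧ shear σ q u x = 0)) :
    (∀ i, 0 ≤ beamState σ q u i x) ∧ ∃ k, 0 < beamState σ q u k x := by
  refine ⟨fun i => ?_, ?_⟩
  · fin_cases i
    exacts [h0, h1, mul_nonneg hσ.le h2, h3]
  · by_contra! hzero
    refine hnz ⟨(hzero 0).antisymm h0, (hzero 1).antisymm h1, ?_, (hzero 3).antisymm h3⟩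
    exact (nonpos_of_mul_nonpos_right (hzero 2) hσ).antisymm h2

end Beam

theorem stmt_4_general (ℓ a b : ℝ) (hab : a < b) (hsub : Set.Icc a b ⊆ Set.Icc 0 ℓ)
    (ρ σ q u : ℝ → ℝ) (ρ₀ σ₀ : ℝ) (hρ₀ : 0 < ρ₀) (hσ₀ : 0 < σ₀)
    (hρc : Continuous ρ) (hσc : ContDiff ℝ 2 σ) (hqc : ContDiff ℝ 1 q)
    (hρ : ∀ x ∈ Set.Icc 0 ℓ, ρ₀ ≤ ρ x)
    (hσ : ∀ x ∈ Set.Icc 0 ℓ, σ₀ ≤ σ x)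
    (hq : ∀ x ∈ Set.Icc 0 ℓ, 0 ≤ q x)
    (hu : ContDiff ℝ 4 u)
    (hode : ∀ x ∈ Set.Icc a b,
      deriv (deriv (fun y => σ y * deriv (deriv u) y)) x
        - deriv (fun y => q y * deriv u y) x - ρ x * u x = 0)
    (h0 : 0 ≤ u a) (h1 : 0 ≤ deriv u a) (h2 : 0 ≤ deriv (deriv u) a)
    (h3 : 0 ≤ deriv (fun y => σ y * deriv (deriv u) y) a - q a * deriv u a)
    (hnz : ¬(u a = 0 ∧ deriv u a = 0 ∧ deriv (deriv u) a = 0 ∧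
      deriv (fun y => σ y * deriv (deriv u) y) a - q a * deriv u a = 0)) :
    ∀ x ∈ Set.Ioc a b,
      0 < u x ∧ 0 < deriv u x ∧ 0 < deriv (deriv u) x ∧
      0 < deriv (fun y => σ y * deriv (deriv u) y) x - q x * deriv u x := by
  have hρpos : ∀ x ∈ Icc a b, 0 < ρ x := fun x hx => hρ₀.trans_le (hρ x (hsub hx))
  have hσpos : ∀ x ∈ Icc a b, 0 < σ x := fun x hx => hσ₀.trans_le (hσ x (hsub hx))
  have hsys : ∀ x ∈ Icc a b, ∀ i, HasDerivAt (beamState σ q u i)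
      ((beamMatrix ρ σ q x *ᵥ fun j => beamState σ q u j x) i) x := fun x hx =>
    hasDerivAt_beamState hσc hqc hu (hσpos x hx).ne' (hode x hx)
  have hA : ∀ x ∈ Icc a b, ∀ i j, 0 ≤ beamMatrix ρ σ q x i j := fun x hx =>
    beamMatrix_nonneg (hρpos x hx).le (hσpos x hx).le (hq x (hsub hx))
  obtain ⟨Q, hQ⟩ := (isCompact_Icc (a := a) (b := b)).bddAbove_image hqc.continuous.continuousOn
  obtain ⟨R, hR⟩ := (isCompact_Icc (a := a) (b := b)).bddAbove_image hρc.continuousOn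
  have hM : ∀ x ∈ Icc a b, ∀ i,
      ∑ j, beamMatrix ρ σ q x i j ≤ max (max 1 σ₀⁻¹) (max (Q + 1) R) := fun x hx =>
    sum_beamMatrix_le hσ₀ (hσ x (hsub hx)) (hQ ⟨x, hx, rfl⟩) (hR ⟨x, hx, rfl⟩)
  obtain ⟨hinit, k, hk⟩ :=
    beamState_nonneg_and_exists_pos (hσpos a (left_mem_Icc.2 hab.le)) h0 h1 h2 h3 hnz
  have hnonneg := nonneg_of_hasDerivAt_mulVec hsys hA hM hinit
  have hpos : ∀ i, ∀ x ∈ Ioc a b, 0 < beamState σ q u i x :=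
    Fin.forall_of_forall_add_one_imp
      (fun i => pos_on_Ioc_of_pos_entry hsys hA hnonneg fun x hx =>
        beamMatrix_add_one_pos (hρpos x (Ioo_subset_Icc_self hx))
          (hσpos x (Ioo_subset_Icc_self hx)) i)
      (pos_on_Ioc_of_pos_left hsys hA hnonneg hk)
  intro x hx
  exact ⟨hpos 0 x hx, hpos 1 x hx,
    pos_of_mul_pos_right (hpos 2 x hx) (hσpos x (Ioc_subset_Icc_self hx)).le, hpos 3 x hx⟩

/-- sign-propagation lemma: for a nontrivial C⁴ solution of
(σu'')'' - (qu')' - ρu = 0 on [a,b] with ρ, σ > 0, q ≥ 0, if u, u', u'' and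
Tu = (σu'')' - qu' are nonnegative at a and not all zero, then all four are
positive on (a, b]. -/
theorem stmt_4 (ℓ a b : ℝ) (hℓ : 0 < ℓ) (hab : a < b) (hsub : Set.Icc a b ⊆ Set.Icc 0 ℓ)
    (ρ σ q u : ℝ → ℝ) (ρ₀ σ₀ : ℝ) (hρ₀ : 0 < ρ₀) (hσ₀ : 0 < σ₀)
    (hρc : Continuous ρ) (hσc : ContDiff ℝ 2 σ) (hqc : ContDiff ℝ 1 q)
    (hρ : ∀ x ∈ Set.Icc 0 ℓ, ρ₀ ≤ ρ x)
    (hσ : ∀ x ∈ Set.Icc 0 ℓ, σ₀ ≤ σ x)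
    (hq : ∀ x ∈ Set.Icc 0 ℓ, 0 ≤ q x)
    (hu : ContDiff ℝ 4 u)
    (hode : ∀ x ∈ Set.Icc a b,
      deriv (deriv (fun y => σ y * deriv (deriv u) y)) x
        - deriv (fun y => q y * deriv u y) x - ρ x * u x = 0)
    (hnontriv : ∃ x ∈ Set.Icc a b, u x ≠ 0)
    (h0 : 0 ≤ u a) (h1 : 0 ≤ deriv u a) (h2 : 0 ≤ deriv (deriv u) a)
    (h3 : 0 ≤ deriv (fun y => σ y * deriv (deriv u) y) a - q a * deriv u a)
    (hnz : ¬(u a = 0 ∧ deriv u a = 0 ∧ deriv (deriv u) a = 0 ∧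
      deriv (fun y => σ y * deriv (deriv u) y) a - q a * deriv u a = 0)) :
    ∀ x ∈ Set.Ioc a b,
      0 < u x ∧ 0 < deriv u x ∧ 0 < deriv (deriv u) x ∧
      0 < deriv (fun y => σ y * deriv (deriv u) y) x - q x * deriv u x :=
  stmt_4_general ℓ a b hab hsub ρ σ q u ρ₀ σ₀ hρ₀ hσ₀ hρc hσc hqc hρ hσ hq hu hode h0 h1 h2 h3 hnz
end

section
/- Let ρ, σ, q satisfy ρ, σ > 0, q ≥ 0 on [0,ℓ], and let λ > 0 be an eigenvalue of (σ φ'')'' - (q φ')' = λ ρ φ with clamped boundary conditions φ(0) = φ'(0) = φ(ℓ) = φ'(ℓ) = 0, with eigenfunction Φ. Then Φ''(ℓ) ≠ 0. -/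
/-!
Write `P = σΦ''` and `T = P' - qΦ'`, so that the equation becomes `T' = λρΦ`. If
`Φ''(ℓ) = 0`, then `Φ`, `Φ'` and `P` vanish at `ℓ`. If also `T(ℓ) = 0`, the energy
`Φ² + Φ'² + P² + T²` satisfies `E' ≥ -K E` and vanishes at `ℓ`, hence vanishes on `[0, ℓ]`,
contradicting `Φ ≢ 0`. If `T(ℓ) < 0`, signs propagate backwards from `ℓ`: `P' < 0`, so `P > 0`,
so `Φ'' > 0`, so `Φ' < 0`, so `Φ > 0`, so `T` increases and `P' = T + qΦ' ≤ T(ℓ) < 0` again;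
this forces `Φ(0) > 0`. The case `T(ℓ) > 0` is the same for `-Φ`.
-/

open Real Set

/-- The fourth-order equation `(σ u'')'' - (q u')' = r u` on `[a, b]`, written as a first-order
system in `u₁ = u'`, `u₂ = u''`, `P = σ u''` and `T = P' - q u'`. -/
structure IsBeamSolution (a b : ℝ) (σ q r u u₁ u₂ P T : ℝ → ℝ) : Prop where
  hasDerivAt_u : ∀ x ∈ Icc a b, HasDerivAt u (u₁ x) x
  hasDerivAt_u₁ : ∀ x ∈ Icc a b, HasDerivAt u₁ (u₂ x) x
  hasDerivAt_P : ∀ x ∈ Icc a b, HasDerivAt P (T x + q x * u₁ x) x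
  hasDerivAt_T : ∀ x ∈ Icc a b, HasDerivAt T (r x * u x) x
  P_eq : ∀ x ∈ Icc a b, P x = σ x * u₂ x
  σ_pos : ∀ x ∈ Icc a b, 0 < σ x
  q_nonneg : ∀ x ∈ Icc a b, 0 ≤ q x
  r_nonneg : ∀ x ∈ Icc a b, 0 ≤ r x
  continuousOn_σ : ContinuousOn σ (Icc a b)
  continuousOn_q : ContinuousOn q (Icc a b)
  continuousOn_r : ContinuousOn r (Icc a b)

lemma pos_of_hasDerivAt_neg_of_right_eq_zero {f f' : ℝ → ℝ} {a b x : ℝ}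
    (hf : ∀ y ∈ Icc a b, HasDerivAt f (f' y) y) (hf' : ∀ y ∈ Ioo a b, f' y < 0) (hb : f b = 0)
    (hx : x ∈ Ico a b) : 0 < f x := by
  have hanti : StrictAntiOn f (Icc a b) := by
    refine strictAntiOn_of_hasDerivWithinAt_neg (f' := f') (convex_Icc a b)
      (fun y hy ↦ (hf y hy).continuousAt.continuousWithinAt) (fun y hy ↦ ?_) (fun y hy ↦ ?_)
    all_goals rw [interior_Icc] at hy
    · exact (hf y (Ioo_subset_Icc_self hy)).hasDerivWithinAt
    · exact hf' y hy
  simpa [hb] using hanti (Ico_subset_Icc_self hx) (right_mem_Icc.2 (hx.1.trans hx.2.le)) hx.2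

/-- `2 (a b + b e + p (t + q b) + t (r a))` is the derivative of the energy `a² + b² + p² + t²`
along the system, at a point where `(u, u', u'', P, T) = (a, b, e, p, t)`. -/
lemma neg_mul_energy_le_energy_deriv {a b e p t q r Q R S : ℝ} (he : |e| ≤ S * |p|)
    (hq : |q| ≤ Q) (hr : |r| ≤ R) :
    -(3 + S ^ 2 + Q + R) * (a ^ 2 + b ^ 2 + p ^ 2 + t ^ 2)
      ≤ 2 * (a * b + b * e + p * (t + q * b) + t * (r * a)) := by
  have hQ : 0 ≤ Q := (abs_nonneg q).trans hq
  have hR : 0 ≤ R := (abs_nonneg r).trans hr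
  have he2 : e ^ 2 ≤ S ^ 2 * p ^ 2 := by
    rw [← sq_abs e, ← sq_abs p, ← mul_pow]
    exact pow_le_pow_left₀ (abs_nonneg e) he 2
  have hqpb : -(Q * (p ^ 2 + b ^ 2)) ≤ 2 * (p * (q * b)) := by
    nlinarith [sq_nonneg (p + b), sq_nonneg (p - b), abs_le.1 hq]
  have hrta : -(R * (t ^ 2 + a ^ 2)) ≤ 2 * (t * (r * a)) := by
    nlinarith [sq_nonneg (t + a), sq_nonneg (t - a), abs_le.1 hr]
  nlinarith [sq_nonneg (a + b), sq_nonneg (b + e), sq_nonneg (p + t), sq_nonneg a, sq_nonneg b,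
    sq_nonneg p, sq_nonneg t, mul_nonneg hQ (sq_nonneg a), mul_nonneg hQ (sq_nonneg t),
    mul_nonneg hR (sq_nonneg b), mul_nonneg hR (sq_nonneg p),
    mul_nonneg (sq_nonneg S) (sq_nonneg a), mul_nonneg (sq_nonneg S) (sq_nonneg b),
    mul_nonneg (sq_nonneg S) (sq_nonneg t)]

lemma eq_zero_of_neg_mul_le_deriv {E E' : ℝ → ℝ} {a b K : ℝ}
    (hE : ∀ x ∈ Icc a b, HasDerivAt E (E' x) x) (hE' : ∀ x ∈ Icc a b, -K * E x ≤ E' x)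
    (hE_nonneg : ∀ x ∈ Icc a b, 0 ≤ E x) (hb : E b = 0) : ∀ x ∈ Icc a b, E x = 0 := by
  intro x hx
  -- `exp (K x) E x` is monotone, nonnegative, and vanishes at `b`.
  have hG : ∀ y ∈ Icc a b,
      HasDerivAt (fun y ↦ exp (K * y) * E y) (exp (K * y) * (K * E y + E' y)) y := fun y hy ↦ by
    have := (((hasDerivAt_id y).const_mul K).exp).mul (hE y hy)
    exact this.congr_deriv (by simp only [id, mul_one]; ring)
  have hG_mono : MonotoneOn (fun y ↦ exp (K * y) * E y) (Icc a b) := by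
    refine monotoneOn_of_hasDerivWithinAt_nonneg (convex_Icc a b)
      (fun y hy ↦ (hG y hy).continuousAt.continuousWithinAt)
      (fun y hy ↦ (hG y (interior_subset hy)).hasDerivWithinAt) (fun y hy ↦ ?_)
    have := hE' y (interior_subset hy)
    exact mul_nonneg (exp_pos _).le (by linarith)
  have := hG_mono hx (right_mem_Icc.2 (hx.1.trans hx.2)) hx.2
  simp only [hb, mul_zero] at this
  exact le_antisymm (nonpos_of_mul_nonpos_right this (exp_pos _)) (hE_nonneg x hx)

namespace IsBeamSolution

variable {a b : ℝ} {σ q r u u₁ u₂ P T : ℝ → ℝ}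

lemma mono (h : IsBeamSolution a b σ q r u u₁ u₂ P T) {a' b' : ℝ} (hsub : Icc a' b' ⊆ Icc a b) :
    IsBeamSolution a' b' σ q r u u₁ u₂ P T where
  hasDerivAt_u x hx := h.hasDerivAt_u x (hsub hx)
  hasDerivAt_u₁ x hx := h.hasDerivAt_u₁ x (hsub hx)
  hasDerivAt_P x hx := h.hasDerivAt_P x (hsub hx)
  hasDerivAt_T x hx := h.hasDerivAt_T x (hsub hx)
  P_eq x hx := h.P_eq x (hsub hx)
  σ_pos x hx := h.σ_pos x (hsub hx)
  q_nonneg x hx := h.q_nonneg x (hsub hx)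
  r_nonneg x hx := h.r_nonneg x (hsub hx)
  continuousOn_σ := h.continuousOn_σ.mono hsub
  continuousOn_q := h.continuousOn_q.mono hsub
  continuousOn_r := h.continuousOn_r.mono hsub

lemma neg (h : IsBeamSolution a b σ q r u u₁ u₂ P T) :
    IsBeamSolution a b σ q r (-u) (-u₁) (-u₂) (-P) (-T) where
  hasDerivAt_u x hx := (h.hasDerivAt_u x hx).neg
  hasDerivAt_u₁ x hx := (h.hasDerivAt_u₁ x hx).neg
  hasDerivAt_P x hx :=
    (h.hasDerivAt_P x hx).neg.congr_deriv (by simp only [Pi.neg_apply]; ring)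
  hasDerivAt_T x hx :=
    (h.hasDerivAt_T x hx).neg.congr_deriv (by simp only [Pi.neg_apply]; ring)
  P_eq x hx := by simp only [Pi.neg_apply, h.P_eq x hx, mul_neg]
  σ_pos := h.σ_pos
  q_nonneg := h.q_nonneg
  r_nonneg := h.r_nonneg
  continuousOn_σ := h.continuousOn_σ
  continuousOn_q := h.continuousOn_q
  continuousOn_r := h.continuousOn_r

lemma pos_and_deriv_P_le_of_deriv_P_neg (h : IsBeamSolution a b σ q r u u₁ u₂ P T) (hab : a ≤ b)
    (hu : u b = 0) (hu₁ : u₁ b = 0) (hP : P b = 0)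
    (hP' : ∀ x ∈ Ioo a b, T x + q x * u₁ x < 0) :
    (∀ x ∈ Ico a b, 0 < u x) ∧ ∀ x ∈ Icc a b, T x + q x * u₁ x ≤ T b := by
  have hP_pos : ∀ x ∈ Ico a b, 0 < P x :=
    fun x hx ↦ pos_of_hasDerivAt_neg_of_right_eq_zero h.hasDerivAt_P hP' hP hx
  have hu₂_pos : ∀ x ∈ Ico a b, 0 < u₂ x := fun x hx ↦ by
    have := h.P_eq x (Ico_subset_Icc_self hx)
    exact pos_of_mul_pos_right (this ▸ hP_pos x hx) (h.σ_pos x (Ico_subset_Icc_self hx)).le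
  have hu₁_neg : ∀ x ∈ Ico a b, u₁ x < 0 := fun x hx ↦ by
    have := pos_of_hasDerivAt_neg_of_right_eq_zero (f := -u₁)
      (fun y hy ↦ (h.hasDerivAt_u₁ y hy).neg)
      (fun y hy ↦ neg_neg_of_pos (hu₂_pos y (Ioo_subset_Ico_self hy))) (by simp [hu₁]) hx
    simpa using this
  have hu₁_nonpos : ∀ x ∈ Icc a b, u₁ x ≤ 0 := fun x hx ↦ by
    rcases hx.2.lt_or_eq with hxb | rfl
    exacts [(hu₁_neg x ⟨hx.1, hxb⟩).le, hu₁.le]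
  have hu_pos : ∀ x ∈ Ico a b, 0 < u x :=
    fun x hx ↦ pos_of_hasDerivAt_neg_of_right_eq_zero h.hasDerivAt_u
      (fun y hy ↦ hu₁_neg y (Ioo_subset_Ico_self hy)) hu hx
  have hT_mono : MonotoneOn T (Icc a b) := by
    refine monotoneOn_of_hasDerivWithinAt_nonneg (f' := fun x ↦ r x * u x) (convex_Icc a b)
      (fun x hx ↦ (h.hasDerivAt_T x hx).continuousAt.continuousWithinAt) (fun x hx ↦ ?_)
      (fun x hx ↦ ?_)
    all_goals rw [interior_Icc] at hx
    · exact (h.hasDerivAt_T x (Ioo_subset_Icc_self hx)).hasDerivWithinAt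
    · exact mul_nonneg (h.r_nonneg x (Ioo_subset_Icc_self hx))
        (hu_pos x (Ioo_subset_Ico_self hx)).le
  refine ⟨hu_pos, fun x hx ↦ ?_⟩
  have hTx : T x ≤ T b := hT_mono hx (right_mem_Icc.2 hab) hx.2
  nlinarith [h.q_nonneg x hx, hu₁_nonpos x hx]

theorem pos_left_of_T_neg (h : IsBeamSolution a b σ q r u u₁ u₂ P T) (hab : a < b)
    (hu : u b = 0) (hu₁ : u₁ b = 0) (hP : P b = 0) (hT : T b < 0) : 0 < u a := by
  set P' : ℝ → ℝ := fun x ↦ T x + q x * u₁ x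
  -- At the last point `z` of `[a, b]` with `P' z ≥ 0`, the chain on `[z, b]` gives `P' z ≤ T b < 0`.
  have hP'_neg : ∀ x ∈ Icc a b, P' x < 0 := by
    by_contra! hZ
    set Z := Icc a b ∩ P' ⁻¹' Ici 0
    have hP'_cont : ContinuousOn P' (Icc a b) := fun x hx ↦
      ((h.hasDerivAt_T x hx).continuousAt.continuousWithinAt).add
        ((h.continuousOn_q x hx).mul (h.hasDerivAt_u₁ x hx).continuousAt.continuousWithinAt)
    have hZ_compact : IsCompact Z := isCompact_Icc.of_isClosed_subset
      (hP'_cont.preimage_isClosed_of_isClosed isClosed_Icc isClosed_Ici) inter_subset_left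
    obtain ⟨z, ⟨hz, hz0⟩, hz_max⟩ := hZ_compact.exists_isGreatest hZ
    have hzb : z ≤ b := hz.2
    have hneg : ∀ x ∈ Ioo z b, P' x < 0 := fun x hx ↦ by
      by_contra! hx0
      exact (hz_max ⟨⟨hz.1.trans hx.1.le, hx.2.le⟩, hx0⟩).not_gt hx.1
    have hz_le := ((h.mono (Icc_subset_Icc_left hz.1)).pos_and_deriv_P_le_of_deriv_P_neg
      hzb hu hu₁ hP hneg).2 z (left_mem_Icc.2 hzb)
    exact (hz_le.trans_lt hT).not_ge hz0
  exact (h.pos_and_deriv_P_le_of_deriv_P_neg hab.le hu hu₁ hP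
    (fun x hx ↦ hP'_neg x (Ioo_subset_Icc_self hx))).1 a (left_mem_Ico.2 hab)

theorem eq_zero_of_right_eq_zero (h : IsBeamSolution a b σ q r u u₁ u₂ P T)
    (hu : u b = 0) (hu₁ : u₁ b = 0) (hP : P b = 0) (hT : T b = 0) :
    ∀ x ∈ Icc a b, u x = 0 := by
  obtain ⟨Q, hQ⟩ := isCompact_Icc.exists_bound_of_continuousOn h.continuousOn_q
  obtain ⟨R, hR⟩ := isCompact_Icc.exists_bound_of_continuousOn h.continuousOn_r
  obtain ⟨S, hS⟩ := isCompact_Icc.exists_bound_of_continuousOn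
    (h.continuousOn_σ.inv₀ fun y hy ↦ (h.σ_pos y hy).ne')
  have hu₂ : ∀ y ∈ Icc a b, |u₂ y| ≤ S * |P y| := fun y hy ↦ by
    have hσ := h.σ_pos y hy
    have : u₂ y = (σ y)⁻¹ * P y := by rw [h.P_eq y hy]; field_simp
    rw [this, abs_mul]
    exact mul_le_mul_of_nonneg_right (hS y hy) (abs_nonneg _)
  have hE := eq_zero_of_neg_mul_le_deriv (K := 3 + S ^ 2 + Q + R)
    (E := fun y ↦ u y ^ 2 + u₁ y ^ 2 + P y ^ 2 + T y ^ 2)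
    (E' := fun y ↦ 2 * (u y * u₁ y + u₁ y * u₂ y + P y * (T y + q y * u₁ y) + T y * (r y * u y)))
    (fun y hy ↦ by
      have := ((((h.hasDerivAt_u y hy).pow 2).add ((h.hasDerivAt_u₁ y hy).pow 2)).add
        ((h.hasDerivAt_P y hy).pow 2)).add ((h.hasDerivAt_T y hy).pow 2)
      exact this.congr_deriv (by simp only [Nat.cast_ofNat]; ring))
    (fun y hy ↦ neg_mul_energy_le_energy_deriv (hu₂ y hy) (hQ y hy) (hR y hy))
    (fun y _ ↦ by positivity) (by simp only [hu, hu₁, hP, hT]; norm_num)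
  intro x hx
  have := hE x hx
  nlinarith [sq_nonneg (u₁ x), sq_nonneg (P x), sq_nonneg (T x), sq_nonneg (u x)]

end IsBeamSolution

theorem isBeamSolution_of_contDiff {a b : ℝ} {σ q r Φ : ℝ → ℝ}
    (hσc : ContDiff ℝ 2 σ) (hqc : ContDiff ℝ 1 q) (hrc : Continuous r) (hΦ : ContDiff ℝ 4 Φ)
    (hσ : ∀ x ∈ Icc a b, 0 < σ x) (hq : ∀ x ∈ Icc a b, 0 ≤ q x) (hr : ∀ x ∈ Icc a b, 0 ≤ r x)
    (hode : ∀ x ∈ Icc a b,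
      deriv (deriv (fun y ↦ σ y * deriv (deriv Φ) y)) x
        - deriv (fun y ↦ q y * deriv Φ y) x = r x * Φ x) :
    IsBeamSolution a b σ q r Φ (deriv Φ) (deriv (deriv Φ)) (fun y ↦ σ y * deriv (deriv Φ) y)
      (fun y ↦ deriv (fun y ↦ σ y * deriv (deriv Φ) y) y - q y * deriv Φ y) := by
  have hΦ₁ : ContDiff ℝ 3 (deriv Φ) := hΦ.deriv'
  have hΦ₂ : ContDiff ℝ 2 (deriv (deriv Φ)) := hΦ₁.deriv'
  have hP : ContDiff ℝ 2 (fun y ↦ σ y * deriv (deriv Φ) y) := hσc.mul hΦ₂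
  have hP' : ContDiff ℝ 1 (deriv fun y ↦ σ y * deriv (deriv Φ) y) := hP.deriv'
  have hqΦ₁ : ContDiff ℝ 1 (fun y ↦ q y * deriv Φ y) := hqc.mul (hΦ₁.of_le (by norm_num))
  exact {
    hasDerivAt_u := fun x _ ↦ (hΦ.differentiable (by norm_num) x).hasDerivAt
    hasDerivAt_u₁ := fun x _ ↦ (hΦ₁.differentiable (by norm_num) x).hasDerivAt
    hasDerivAt_P := fun x _ ↦
      (hP.differentiable (by norm_num) x).hasDerivAt.congr_deriv (sub_add_cancel _ _).symm
    hasDerivAt_T := fun x hx ↦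
      ((hP'.differentiable one_ne_zero x).hasDerivAt.sub
        (hqΦ₁.differentiable one_ne_zero x).hasDerivAt).congr_deriv (hode x hx)
    P_eq := fun _ _ ↦ rfl
    σ_pos := hσ
    q_nonneg := hq
    r_nonneg := hr
    continuousOn_σ := hσc.continuous.continuousOn
    continuousOn_q := hqc.continuous.continuousOn
    continuousOn_r := hrc.continuousOn }

/-- for an eigenfunction Φ of the clamped fourth-order problem
(σΦ'')'' - (qΦ')' = λρΦ, Φ(0) = Φ'(0) = Φ(ℓ) = Φ'(ℓ) = 0 with λ > 0,
one has Φ''(ℓ) ≠ 0. -/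
theorem stmt_6 (ℓ : ℝ) (hℓ : 0 < ℓ) (ρ σ q : ℝ → ℝ) (lam : ℝ) (hlam : 0 < lam)
    (hρc : Continuous ρ) (hσc : ContDiff ℝ 2 σ) (hqc : ContDiff ℝ 1 q)
    (hρ : ∀ x ∈ Set.Icc 0 ℓ, 0 < ρ x)
    (hσ : ∀ x ∈ Set.Icc 0 ℓ, 0 < σ x)
    (hq : ∀ x ∈ Set.Icc 0 ℓ, 0 ≤ q x)
    (Φ : ℝ → ℝ) (hΦ : ContDiff ℝ 4 Φ)
    (hode : ∀ x ∈ Set.Icc 0 ℓ,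
      deriv (deriv (fun y => σ y * deriv (deriv Φ) y)) x
        - deriv (fun y => q y * deriv Φ y) x = lam * ρ x * Φ x)
    (hbc : Φ 0 = 0 ∧ deriv Φ 0 = 0 ∧ Φ ℓ = 0 ∧ deriv Φ ℓ = 0)
    (hnontriv : ∃ x ∈ Set.Icc 0 ℓ, Φ x ≠ 0) :
    deriv (deriv Φ) ℓ ≠ 0 := by
  intro hΦ₂ℓ
  obtain ⟨hΦ0, -, hΦℓ, hΦ₁ℓ⟩ := hbc
  have h := isBeamSolution_of_contDiff (r := fun x ↦ lam * ρ x) hσc hqc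
    (continuous_const.mul hρc) hΦ hσ hq (fun x hx ↦ (mul_pos hlam (hρ x hx)).le) hode
  have hPℓ : σ ℓ * deriv (deriv Φ) ℓ = 0 := by rw [hΦ₂ℓ, mul_zero]
  set T := fun y ↦ deriv (fun y ↦ σ y * deriv (deriv Φ) y) y - q y * deriv Φ y
  rcases lt_trichotomy (T ℓ) 0 with hT | hT | hT
  · exact (h.pos_left_of_T_neg hℓ hΦℓ hΦ₁ℓ hPℓ hT).ne' hΦ0
  · obtain ⟨x, hx, hΦx⟩ := hnontriv
    exact hΦx (h.eq_zero_of_right_eq_zero hΦℓ hΦ₁ℓ hPℓ hT x hx)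
  · have := h.neg.pos_left_of_T_neg hℓ (by simp [hΦℓ]) (by simp [hΦ₁ℓ]) (by simp [hPℓ])
      (by simpa using hT)
    simp [hΦ0] at this
end

section
/- Let γ > 0. For each sufficiently large n ∈ ℕ, the equation cos(μγ) cosh(μγ) = 1 has a solution μ_n with μ_n = (π/γ)(n - 1/2) + O(e^{-μ_n γ}); more precisely, |μ_n - (π/γ)(n - 1/2)| ≤ C e^{-n} for some constant C and all large n. -/
open Real Set

/-!
Put `c = π (n - 1/2)` and `ε = e^{-n}`. Since `cos (c + t) = (-1)^n sin t`, the function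
`cos x cosh x` takes the values `±(-1)^n sin ε cosh (c ± ε)` at `c ± ε`; as
`sin ε cosh (c ± ε) ≳ ε e^{c - ε} = e^{(π - 1) n - π/2 - ε}` exceeds `1` for `n ≥ 3`, one value is
below `1` and the other above, so the intermediate value theorem gives a root within `ε` of `c`.
Rescaling by `γ` gives the root `μ = x / γ`.
-/

theorem cos_pi_mul_sub_half_add (n : ℕ) (t : ℝ) :
    cos (π * (n - 1 / 2) + t) = (-1) ^ n * sin t := by
  rw [show π * (n - 1 / 2) + t = n * π - (π / 2 - t) by ring, cos_nat_mul_pi_sub,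
    cos_pi_div_two_sub]

theorem exp_div_two_le_cosh (x : ℝ) : exp x / 2 ≤ cosh x := by
  rw [cosh_eq]
  linarith [exp_pos (-x)]

theorem one_mem_uIcc_mul_neg_mul {s a b : ℝ} (hs : s = 1 ∨ s = -1) (ha : 1 < a) (hb : 1 < b) :
    (1 : ℝ) ∈ uIcc (s * a) (-s * b) := by
  rcases hs with rfl | rfl
  · exact mem_uIcc.2 (Or.inr ⟨by linarith, by linarith⟩)
  · exact mem_uIcc.2 (Or.inl ⟨by linarith, by linarith⟩)

theorem exists_cos_mul_cosh_eq_one_near (n : ℕ) {ε : ℝ} (hε : 0 ≤ ε)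
    (hadd : 1 < sin ε * cosh (π * (n - 1 / 2) + ε))
    (hsub : 1 < sin ε * cosh (π * (n - 1 / 2) - ε)) :
    ∃ x, |x - π * (n - 1 / 2)| ≤ ε ∧ cos x * cosh x = 1 := by
  set c := π * (n - 1 / 2)
  have hval : (1 : ℝ) ∈ uIcc (cos (c + ε) * cosh (c + ε)) (cos (c - ε) * cosh (c - ε)) := by
    rw [sub_eq_add_neg c ε, cos_pi_mul_sub_half_add, cos_pi_mul_sub_half_add, sin_neg,
      ← sub_eq_add_neg, mul_assoc, mul_neg, ← neg_mul, mul_assoc]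
    exact one_mem_uIcc_mul_neg_mul (neg_one_pow_eq_or ℝ n) hadd hsub
  obtain ⟨x, hx, hfx⟩ :=
    intermediate_value_uIcc (continuous_cos.mul continuous_cosh).continuousOn hval
  rw [uIcc_of_ge (by linarith)] at hx
  exact ⟨x, abs_sub_le_iff.2 ⟨by linarith [hx.2], by linarith [hx.1]⟩, hfx⟩

theorem one_lt_sin_exp_neg_mul_cosh {n : ℕ} (hn : 3 ≤ n) {y : ℝ}
    (hy : π * (n - 1 / 2) - exp (-n) ≤ y) : 1 < sin (exp (-n)) * cosh y := by
  have hn' : (3 : ℝ) ≤ n := by exact_mod_cast hn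
  have hε : exp (-n) ≤ 1 := exp_le_one_iff.2 (by linarith)
  have hπ := pi_gt_three
  calc 1 < (y - n + 1) / π := by
          rw [one_lt_div pi_pos]
          nlinarith
    _ ≤ exp (y - n) / π := by gcongr; linarith [add_one_le_exp (y - n)]
    _ = 2 / π * exp (-n) * (exp y / 2) := by
          rw [sub_eq_add_neg, exp_add]; field_simp
    _ ≤ sin (exp (-n)) * cosh y := by
          have hsin := mul_le_sin (exp_pos (-n : ℝ)).le (by linarith)
          exact mul_le_mul hsin (exp_div_two_le_cosh y) (by positivity)
            ((by positivity : (0 : ℝ) ≤ 2 / π * exp (-n)).trans hsin)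

/-- for large n the characteristic equation
cos(μγ)cosh(μγ) = 1 has a root μ_n with |μ_n - (π/γ)(n - 1/2)| ≤ C e^{-n}. -/
theorem stmt_12 (γ : ℝ) (hγ : 0 < γ) :
    ∃ C : ℝ, ∃ N : ℕ, ∀ n : ℕ, N ≤ n →
      ∃ μ : ℝ, Real.cos (μ * γ) * Real.cosh (μ * γ) = 1 ∧
        |μ - (π / γ) * ((n : ℝ) - 1 / 2)| ≤ C * Real.exp (-(n : ℝ)) := by
  refine ⟨1 / γ, 3, fun n hn => ?_⟩
  have hε := (exp_pos (-n : ℝ)).le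
  obtain ⟨x, hx, hfx⟩ := exists_cos_mul_cosh_eq_one_near n hε
    (one_lt_sin_exp_neg_mul_cosh hn (by linarith)) (one_lt_sin_exp_neg_mul_cosh hn le_rfl)
  refine ⟨x / γ, by rwa [div_mul_cancel₀ x hγ.ne'], ?_⟩
  rw [div_mul_eq_mul_div, ← sub_div, abs_div, abs_of_pos hγ, one_div_mul_eq_div]
  exact div_le_div_of_nonneg_right hx hγ.le
end
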